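/- A continuous flow φ on a compact metric space is KH-kinematic expansive if and only if φ is kinematic expansive and fix(φ) is open. -/

import Mathlib

/-!
Reparametrising by `s = id` gives kinematic expansivity, and `s ≡ 0` shows that points close to
a fixed point are fixed. Conversely, let fix(φ) be open. Its complement `K` is compact and has no
fixed points. Periodic points whose periods tend to `0` can only accumulate at fixed points, so
some time `c > 0` moves every point of `K` by at least some `δ₀ > 0`. A continuous `s` with
`s 0 = 0` that misses a value satisfies `|s t - t| = c` for some `t`, and then one of `φ_t x`,
`φ_{s t} x` is carried to the other by time `c`. Hence tracking a non-fixed orbit within `δ₀`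
forces `s` to be surjective, and the two tracking estimates combine into the kinematic one. For
fixed `x`, the compact open set fix(φ) contains a uniform neighbourhood of itself, so `y` is fixed
too.
-/

open Filter Topology Function

theorem exists_abs_sub_self_eq_of_not_surjective {s : ℝ → ℝ} (hs : Continuous s) (hs0 : s 0 = 0)
    (hsurj : ¬ Surjective s) {c : ℝ} (hc : 0 ≤ c) : ∃ t, |s t - t| = c := by
  obtain ⟨u, hu⟩ := not_forall.mp hsurj
  have hu0 : u ≠ 0 := fun h => hu ⟨0, hs0.trans h.symm⟩
  suffices ∃ b, c ≤ |s b - b| by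
    obtain ⟨b, hb⟩ := this
    exact intermediate_value_univ 0 b (by fun_prop) ⟨by simpa [hs0] using hc, hb⟩
  rcases hu0.lt_or_gt with hu_neg | hu_pos
  · have hlt : ∀ t, u < s t := fun t => not_le.mp fun h =>
      hu (intermediate_value_univ t 0 hs ⟨h, hu_neg.le.trans_eq hs0.symm⟩)
    exact ⟨u - c, by linarith [hlt (u - c), le_abs_self (s (u - c) - (u - c))]⟩
  · have hlt : ∀ t, s t < u := fun t => not_le.mp fun h =>
      hu (intermediate_value_univ 0 t hs ⟨hs0.trans_le hu_pos.le, h⟩)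
    exact ⟨u + c, by linarith [hlt (u + c), neg_abs_le (s (u + c) - (u + c))]⟩

namespace Flow

section Topological

variable {τ X : Type*} [TopologicalSpace τ] [TopologicalSpace X]

def fixedPoints [AddZero τ] (ϕ : Flow τ X) : Set X := {x | ∀ t, ϕ t x = x}

theorem isClosed_fixedPoints [AddZero τ] [T2Space X] (ϕ : Flow τ X) :
    IsClosed ϕ.fixedPoints := by
  simp only [fixedPoints, Set.ofPred_forall]
  exact isClosed_iInter fun t => isClosed_eq (ϕ.continuous_toFun t) continuous_id

theorem map_mem_fixedPoints_iff [AddGroup τ] (ϕ : Flow τ X) {t : τ} {x : X} :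
    ϕ t x ∈ ϕ.fixedPoints ↔ x ∈ ϕ.fixedPoints := by
  refine ⟨fun h s => ?_, fun h s => by rw [h t, h s]⟩
  have hx : x = ϕ t x := by
    rw [← h (-t), ← map_add, neg_add_cancel, map_zero_apply]
  rw [hx]
  exact h s

theorem periodic_of_map_eq (ϕ : Flow ℝ X) {c : ℝ} {p : X} (hp : ϕ c p = p) :
    Periodic (fun t => ϕ t p) c := fun t => by
  simp only [map_add, hp]

theorem mem_fixedPoints_of_tendsto_of_periodic [T2Space X] (ϕ : Flow ℝ X) {ι : Type*}
    {l : Filter ι} [l.NeBot] {c : ι → ℝ} {p : ι → X} {q : X} (hc_pos : ∀ i, 0 < c i)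
    (hc : Tendsto c l (𝓝 0)) (hper : ∀ i, ϕ (c i) (p i) = p i) (hp : Tendsto p l (𝓝 q)) :
    q ∈ ϕ.fixedPoints := by
  intro t
  choose r hr hrt using fun i => (ϕ.periodic_of_map_eq (hper i)).exists_mem_Ico₀ (hc_pos i) t
  have hr0 : Tendsto r l (𝓝 0) :=
    tendsto_of_tendsto_of_tendsto_of_le_of_le tendsto_const_nhds hc
      (fun i => (hr i).1) (fun i => (hr i).2.le)
  have h_lim : Tendsto (fun i => ϕ (r i) (p i)) l (𝓝 (ϕ 0 q)) :=
    (ϕ.cont'.tendsto (0, q)).comp (hr0.prodMk_nhds hp)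
  rw [map_zero_apply] at h_lim
  exact tendsto_nhds_unique ((((ϕ.continuous_toFun t).tendsto q).comp hp).congr hrt) h_lim

end Topological

section Metric

variable {X : Type*} [MetricSpace X] (ϕ : Flow ℝ X)

theorem exists_pos_forall_le_dist_map_self {K : Set X} (hK : IsCompact K)
    (hK_fix : Disjoint K ϕ.fixedPoints) :
    ∃ c > (0 : ℝ), ∃ δ > (0 : ℝ), ∀ w ∈ K, δ ≤ dist (ϕ c w) w := by
  obtain ⟨c, hc, hK_c⟩ : ∃ c > (0 : ℝ), ∀ w ∈ K, ϕ c w ≠ w := by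
    by_contra! h
    choose p hpK hper using fun n : ℕ => h (1 / (n + 1)) Nat.one_div_pos_of_nat
    obtain ⟨q, hqK, κ, hκ, hpq⟩ := hK.tendsto_subseq hpK
    have hq : q ∈ ϕ.fixedPoints :=
      ϕ.mem_fixedPoints_of_tendsto_of_periodic (fun _ => Nat.one_div_pos_of_nat)
        (tendsto_one_div_add_atTop_nhds_zero_nat.comp hκ.tendsto_atTop) (fun i => hper (κ i)) hpq
    exact hK_fix.notMem_of_mem_left hqK hq
  obtain ⟨δ, hδ, hK_δ⟩ := hK.exists_forall_le'
    ((ϕ.continuous_toFun c).dist continuous_id).continuousOn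
    fun w hw => dist_pos.mpr (hK_c w hw)
  exact ⟨c, hc, δ, hδ, hK_δ⟩

def IsKinematicExpansive : Prop :=
  ∀ ε > (0 : ℝ), ∃ δ > (0 : ℝ), ∀ x y : X,
    (∀ t, dist (ϕ t x) (ϕ t y) < δ) → ∃ τ : ℝ, |τ| < ε ∧ y = ϕ τ x

def IsKHKinematicExpansive : Prop :=
  ∀ ε > (0 : ℝ), ∃ δ > (0 : ℝ), ∀ (x y : X) (s : ℝ → ℝ), Continuous s → s 0 = 0 →
    (∀ t, max (dist (ϕ t x) (ϕ (s t) x)) (dist (ϕ t x) (ϕ (s t) y)) < δ) →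
    ∃ τ : ℝ, |τ| < ε ∧ y = ϕ τ x

variable {ϕ}

theorem IsKHKinematicExpansive.isKinematicExpansive (h : ϕ.IsKHKinematicExpansive) :
    ϕ.IsKinematicExpansive := by
  intro ε hε
  obtain ⟨δ, hδ, hKH⟩ := h ε hε
  refine ⟨δ, hδ, fun x y hxy => hKH x y id continuous_id rfl fun t => max_lt ?_ (hxy t)⟩
  rwa [id, dist_self]

theorem IsKHKinematicExpansive.isOpen_fixedPoints (h : ϕ.IsKHKinematicExpansive) :
    IsOpen ϕ.fixedPoints := by
  obtain ⟨δ, hδ, hKH⟩ := h 1 one_pos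
  refine Metric.isOpen_iff.mpr fun x hx => ⟨δ, hδ, fun y hy => ?_⟩
  have hxy : ∀ t, max (dist (ϕ t x) (ϕ 0 x)) (dist (ϕ t x) (ϕ 0 y)) < δ := fun t => by
    rw [hx t, map_zero_apply, map_zero_apply, dist_self, dist_comm]
    exact max_lt hδ hy
  obtain ⟨τ, -, rfl⟩ := hKH x y (fun _ => 0) continuous_const rfl hxy
  exact ϕ.map_mem_fixedPoints_iff.mpr hx

end Metric

section Compact

variable {X : Type*} [MetricSpace X] [CompactSpace X] (ϕ : Flow ℝ X)

theorem exists_pos_surjective_of_dist_lt (hfix : IsOpen ϕ.fixedPoints) :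
    ∃ δ > (0 : ℝ), ∀ x ∉ ϕ.fixedPoints, ∀ s : ℝ → ℝ, Continuous s → s 0 = 0 →
      (∀ t, dist (ϕ t x) (ϕ (s t) x) < δ) → Surjective s := by
  obtain ⟨c, hc, δ, hδ, hK_δ⟩ :=
    ϕ.exists_pos_forall_le_dist_map_self hfix.isClosed_compl.isCompact disjoint_compl_left
  refine ⟨δ, hδ, fun x hx s hs hs0 htrack => by_contra fun hsurj => ?_⟩
  obtain ⟨t, ht⟩ := exists_abs_sub_self_eq_of_not_surjective hs hs0 hsurj hc.le
  rcases (abs_eq hc.le).mp ht with ht | ht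
  · have h := hK_δ (ϕ t x) (ϕ.map_mem_fixedPoints_iff.not.mpr hx)
    rw [← map_add, show c + t = s t by linarith, dist_comm] at h
    exact (htrack t).not_ge h
  · have h := hK_δ (ϕ (s t) x) (ϕ.map_mem_fixedPoints_iff.not.mpr hx)
    rw [← map_add, show c + s t = t by linarith] at h
    exact (htrack t).not_ge h

theorem exists_pos_mem_fixedPoints_of_dist_lt (hfix : IsOpen ϕ.fixedPoints) :
    ∃ r > (0 : ℝ), ∀ x ∈ ϕ.fixedPoints, ∀ y, dist y x < r → y ∈ ϕ.fixedPoints := by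
  obtain ⟨r, hr, hsub⟩ :=
    ϕ.isClosed_fixedPoints.isCompact.exists_thickening_subset_open hfix subset_rfl
  exact ⟨r, hr, fun x hx y hy => hsub (Metric.mem_thickening_iff.mpr ⟨x, hx, hy⟩)⟩

variable {ϕ}

theorem IsKinematicExpansive.isKHKinematicExpansive (hKE : ϕ.IsKinematicExpansive)
    (hfix : IsOpen ϕ.fixedPoints) : ϕ.IsKHKinematicExpansive := by
  obtain ⟨r, hr, hr_fix⟩ := ϕ.exists_pos_mem_fixedPoints_of_dist_lt hfix
  obtain ⟨δ₀, hδ₀, hδ₀_surj⟩ := ϕ.exists_pos_surjective_of_dist_lt hfix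
  intro ε hε
  obtain ⟨δ₁, hδ₁, hKE⟩ := hKE ε hε
  obtain ⟨δ, hδ, hδδ₁, hδδ₀, hδr⟩ : ∃ δ > (0 : ℝ), δ ≤ δ₁ / 2 ∧ δ ≤ δ₀ ∧ δ ≤ r :=
    ⟨min (min (δ₁ / 2) δ₀) r, by positivity, (min_le_left _ _).trans (min_le_left _ _),
      (min_le_left _ _).trans (min_le_right _ _), min_le_right _ _⟩
  refine ⟨δ, hδ, fun x y s hs hs0 htrack => hKE x y ?_⟩
  have h₁ t : dist (ϕ t x) (ϕ (s t) x) < δ := (le_max_left _ _).trans_lt (htrack t)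
  have h₂ t : dist (ϕ t x) (ϕ (s t) y) < δ := (le_max_right _ _).trans_lt (htrack t)
  by_cases hx : x ∈ ϕ.fixedPoints
  · have hxy : dist x y < δ := by simpa only [hs0, map_zero_apply] using h₂ 0
    have hy : y ∈ ϕ.fixedPoints := hr_fix x hx y (by rw [dist_comm]; linarith)
    intro t
    rw [hx t, hy t]
    linarith
  · have hsurj := hδ₀_surj x hx s hs hs0 fun t => (h₁ t).trans_le hδδ₀
    intro u
    obtain ⟨t, rfl⟩ := hsurj u
    linarith [h₁ t, h₂ t, dist_triangle_left (ϕ (s t) x) (ϕ (s t) y) (ϕ t x)]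

theorem isKHKinematicExpansive_iff :
    ϕ.IsKHKinematicExpansive ↔ ϕ.IsKinematicExpansive ∧ IsOpen ϕ.fixedPoints :=
  ⟨fun h => ⟨h.isKinematicExpansive, h.isOpen_fixedPoints⟩,
    fun h => h.1.isKHKinematicExpansive h.2⟩

end Compact

end Flow

theorem stmt10 {X : Type*} [MetricSpace X] [CompactSpace X]
    (φ : ℝ → X → X)
    (hcont : Continuous fun p : ℝ × X => φ p.1 p.2)
    (h0 : ∀ x, φ 0 x = x)
    (hadd : ∀ t s x, φ (t + s) x = φ t (φ s x)) :
    (∀ ε > (0:ℝ), ∃ δ > (0:ℝ), ∀ (x y : X) (s : ℝ → ℝ),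
        Continuous s → s 0 = 0 →
        (∀ t, max (dist (φ t x) (φ (s t) x)) (dist (φ t x) (φ (s t) y)) < δ) →
        ∃ τ : ℝ, |τ| < ε ∧ y = φ τ x) ↔
      ((∀ ε > (0:ℝ), ∃ δ > (0:ℝ), ∀ x y : X,
          (∀ t, dist (φ t x) (φ t y) < δ) → ∃ τ : ℝ, |τ| < ε ∧ y = φ τ x) ∧
        IsOpen {x : X | ∀ t, φ t x = x}) :=
  Flow.isKHKinematicExpansive_iff (ϕ := ⟨φ, hcont, hadd, h0⟩)
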